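/- Let Ω⊂ℝ² be a bounded Lipschitz domain satisfying the interior cone condition with radius r and angle θ. Then for every h ∈ (0, R/(1+sin θ)) where R=r, and every x ∈ Ω, there exists y ∈ Ω with the open disk B_{h sin θ}(y) contained in Ω and |y − x| = h. -/
import Mathlib


open Real
open scoped RealInnerProductSpace

/-- Interior cone condition with radius `r` and angle `θ` for a domain `Ω ⊂ ℝ²`:
every `x ∈ Ω` carries a unit direction `ξ` such that the closed cone
`{x + λη : |η| = 1, η·ξ ≥ cos θ, 0 ≤ λ ≤ r}` is contained in `Ω`. -/
def InteriorConeCondition (Ω : Set (EuclideanSpace ℝ (Fin 2))) (r θ : ℝ) : Prop :=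
  ∀ x ∈ Ω, ∃ ξ : EuclideanSpace ℝ (Fin 2), ‖ξ‖ = 1 ∧
    ∀ η : EuclideanSpace ℝ (Fin 2), ‖η‖ = 1 → ⟪η, ξ⟫ ≥ Real.cos θ →
      ∀ lam : ℝ, lam ∈ Set.Icc (0:ℝ) r → x + lam • η ∈ Ω

set_option maxHeartbeats 1000000 in
/-- If a bounded (Lipschitz) domain `Ω ⊂ ℝ²` satisfies the interior cone
condition with radius `r` and angle `θ`, then for every `h ∈ (0, r/(1+sin θ))` and every
`x ∈ Ω` there exists `y ∈ Ω` with `B_{h sin θ}(y) ⊆ Ω` and `|y − x| = h`. -/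
theorem cone_condition_inner_point
    (Ω : Set (EuclideanSpace ℝ (Fin 2))) (hopen : IsOpen Ω)
    (hbdd : Bornology.IsBounded Ω) (r θ : ℝ) (hr : 0 < r) (hθ : θ ∈ Set.Ioo (0:ℝ) (π/2))
    (hcone : InteriorConeCondition Ω r θ) :
    ∀ h ∈ Set.Ioo (0:ℝ) (r / (1 + Real.sin θ)), ∀ x ∈ Ω,
      ∃ y ∈ Ω, Metric.ball y (h * Real.sin θ) ⊆ Ω ∧ dist y x = h := by
  rintro h ⟨hh0, hhr⟩ x hx
  obtain ⟨ξ, hξ, hcx⟩ := hcone x hx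
  have hθπ : θ ∈ Set.Ioo (-(π/2)) (π/2) := ⟨by linarith [hθ.1, Real.pi_pos], hθ.2⟩
  have hco : 0 < Real.cos θ := Real.cos_pos_of_mem_Ioo hθπ
  have hs : 0 < Real.sin θ := Real.sin_pos_of_pos_of_lt_pi hθ.1 (by linarith [hθ.2, Real.pi_pos])
  have hsc : Real.sin θ ^ 2 + Real.cos θ ^ 2 = 1 := Real.sin_sq_add_cos_sq θ
  have hs1 : Real.sin θ < 1 := by nlinarith
  have hhs : h * (1 + Real.sin θ) < r := by
    rw [div_eq_mul_inv] at hhr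
    calc h * (1 + Real.sin θ) < r * (1 + Real.sin θ)⁻¹ * (1 + Real.sin θ) := by
          apply mul_lt_mul_of_pos_right hhr; linarith
      _ = r := by field_simp
  refine ⟨x + h • ξ, ?_, ?_, ?_⟩
  · have := hcx ξ hξ (by
      rw [real_inner_self_eq_norm_sq, hξ]
      simpa using Real.cos_le_one θ) h ⟨le_of_lt hh0, by nlinarith⟩
    exact this
  · intro z hz
    rw [Metric.mem_ball, dist_eq_norm] at hz
    set v : EuclideanSpace ℝ (Fin 2) := z - x with hvdef
    have hzv : z - (x + h • ξ) = v - h • ξ := by rw [hvdef]; abel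
    rw [hzv] at hz
    set c : ℝ := ⟪v, ξ⟫ with hcdef
    set w : EuclideanSpace ℝ (Fin 2) := v - c • ξ with hwdef
    have hξsq : ⟪ξ, ξ⟫ = 1 := by rw [real_inner_self_eq_norm_sq, hξ]; ring
    have hwξ : ⟪w, ξ⟫ = 0 := by
      rw [hwdef, inner_sub_left, real_inner_smul_left, hξsq]; simp [hcdef]
    have hdecomp : ∀ t : ℝ, ‖v - t • ξ‖ ^ 2 = (c - t) ^ 2 + ‖w‖ ^ 2 := by
      intro t
      have hvt : v - t • ξ = (c - t) • ξ + w := by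
        rw [hwdef, sub_smul]; abel
      rw [hvt, @norm_add_sq_real, real_inner_smul_left, real_inner_comm, hwξ,
        norm_smul, mul_pow]
      simp [hξ, sq_abs]
    have hball : (c - h) ^ 2 + ‖w‖ ^ 2 < (h * Real.sin θ) ^ 2 := by
      have := hdecomp h
      nlinarith [norm_nonneg (v - h • ξ), hz, mul_pos hh0 hs]
    have hv0 : v ≠ 0 := by
      intro h0
      rw [h0] at hz
      rw [zero_sub, norm_neg, norm_smul, hξ, Real.norm_eq_abs, abs_of_pos hh0, mul_one] at hz
      nlinarith
    set L : ℝ := ‖v‖ with hLdef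
    have hL0 : 0 < L := norm_pos_iff.mpr hv0
    have hLsq : L ^ 2 = c ^ 2 + ‖w‖ ^ 2 := by
      have := hdecomp 0
      simpa using this
    have hkey : c * Real.sin θ > ‖w‖ * Real.cos θ := by
      nlinarith [sq_nonneg ((c - h) * Real.cos θ + ‖w‖ * Real.sin θ), norm_nonneg w,
        mul_pos hh0 hs]
    have hc0 : 0 < c := by nlinarith [norm_nonneg w, mul_nonneg (norm_nonneg w) hco.le]
    have h2 : (‖w‖ * Real.cos θ) ^ 2 < (c * Real.sin θ) ^ 2 :=
      pow_lt_pow_left₀ hkey (mul_nonneg (norm_nonneg w) hco.le) two_ne_zero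
    have hcL : c ≥ L * Real.cos θ := by
      nlinarith [h2, mul_nonneg hL0.le hco.le, hc0]
    set η : EuclideanSpace ℝ (Fin 2) := L⁻¹ • v with hηdef
    have hη : ‖η‖ = 1 := by
      rw [hηdef, norm_smul, Real.norm_eq_abs, abs_of_pos (inv_pos.mpr hL0), ← hLdef,
        inv_mul_cancel₀ hL0.ne']
    have hηξ : ⟪η, ξ⟫ ≥ Real.cos θ := by
      rw [hηdef, real_inner_smul_left, ← hcdef]
      have h3 : Real.cos θ ≤ c / L :=
        (le_div_iff₀ hL0).mpr (by linarith [mul_comm (Real.cos θ) L])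
      simpa [div_eq_inv_mul] using h3
    have hLr : L ≤ r := by
      have h1 : L ≤ ‖h • ξ‖ + ‖v - h • ξ‖ :=
        norm_le_norm_add_norm_sub' v (h • ξ)
      rw [norm_smul, hξ, Real.norm_eq_abs, abs_of_pos hh0, mul_one] at h1
      nlinarith
    have := hcx η hη hηξ L ⟨hL0.le, hLr⟩
    have heq : x + L • η = z := by
      rw [hηdef, smul_smul, mul_inv_cancel₀ hL0.ne', one_smul, hvdef]
      abel
    rwa [heq] at this
  · rw [dist_eq_norm]
    have : x + h • ξ - x = h • ξ := by abel
    rw [this, norm_smul, hξ, Real.norm_eq_abs, abs_of_pos hh0, mul_one]
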